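/- Linear convergence bound for Parareal: if ‖Ψ‖ ≤ 1 and ‖Φ^m - Ψ‖ ≤ ε in operator norm, then the error recursion e_j^{(k+1)} = Ψ(e_{j-1}^{(k+1)}) + (Φ^m - Ψ)(e_{j-1}^{(k)}), e_0^{(k)} = 0, satisfies max_j ‖e_j^{(k)}‖ ≤ (N_c · ε)^k · max_j ‖e_j^{(0)}‖ for errors indexed by 0 ≤ j ≤ N_c. -/
import Mathlib


/-- Linear convergence bound for Parareal: if `‖Ψ‖ ≤ 1` and `‖Φ^m - Ψ‖ ≤ ε`,
then `max_j ‖e_j^{(k)}‖ ≤ (N_c ε)^k max_j ‖e_j^{(0)}‖`. -/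
theorem parareal_linear_convergence_bound
    {V : Type*} [NormedAddCommGroup V] [NormedSpace ℝ V]
    (Φ Ψ : V →L[ℝ] V) (m Nc : ℕ) (hm : 1 ≤ m) (hNc : 1 ≤ Nc)
    (ε : ℝ) (hΨ : ‖Ψ‖ ≤ 1) (hε : ‖Φ ^ m - Ψ‖ ≤ ε)
    (e : ℕ → ℕ → V)
    (h0 : ∀ k, e k 0 = 0)
    (hrec : ∀ k j, 1 ≤ j → j ≤ Nc →
      e (k + 1) j = Ψ (e (k + 1) (j - 1)) + (Φ ^ m - Ψ) (e k (j - 1)))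
    (M : ℝ) (hM : ∀ j, j ≤ Nc → ‖e 0 j‖ ≤ M) :
    ∀ k j, j ≤ Nc → ‖e k j‖ ≤ ((Nc : ℝ) * ε) ^ k * M := by
  have hε0 : 0 ≤ ε := le_trans (norm_nonneg _) hε
  have hM0 : 0 ≤ M := le_trans (norm_nonneg _) (hM 0 (Nat.zero_le _))
  intro k
  induction k with
  | zero => intro j hj; simpa using hM j hj
  | succ k ih =>
    set B : ℝ := ((Nc : ℝ) * ε) ^ k * M with hBdef
    have hB : 0 ≤ B := by positivity
    have key : ∀ j, j ≤ Nc → ‖e (k + 1) j‖ ≤ (j : ℝ) * (ε * B) := by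
      intro j
      induction j with
      | zero => intro _; simp [h0]
      | succ j ihj =>
        intro hj
        have hj' : j ≤ Nc := Nat.le_of_succ_le hj
        rw [hrec k (j + 1) (Nat.le_add_left 1 j) hj]
        simp only [Nat.add_sub_cancel]
        have h1 : ‖Ψ (e (k + 1) j)‖ ≤ ‖e (k + 1) j‖ := by
          calc ‖Ψ (e (k + 1) j)‖ ≤ ‖Ψ‖ * ‖e (k + 1) j‖ := Ψ.le_opNorm _
            _ ≤ 1 * ‖e (k + 1) j‖ := by
                exact mul_le_mul_of_nonneg_right hΨ (norm_nonneg _)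
            _ = ‖e (k + 1) j‖ := one_mul _
        have h2 : ‖(Φ ^ m - Ψ) (e k j)‖ ≤ ε * B := by
          calc ‖(Φ ^ m - Ψ) (e k j)‖ ≤ ‖Φ ^ m - Ψ‖ * ‖e k j‖ :=
                (Φ ^ m - Ψ).le_opNorm _
            _ ≤ ε * B := mul_le_mul hε (ih j hj') (norm_nonneg _) hε0
        calc ‖Ψ (e (k + 1) j) + (Φ ^ m - Ψ) (e k j)‖
            ≤ ‖Ψ (e (k + 1) j)‖ + ‖(Φ ^ m - Ψ) (e k j)‖ := norm_add_le _ _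
          _ ≤ (j : ℝ) * (ε * B) + ε * B :=
              add_le_add (le_trans h1 (ihj hj')) h2
          _ = ((j : ℕ) + 1 : ℝ) * (ε * B) := by ring
          _ = ((j + 1 : ℕ) : ℝ) * (ε * B) := by push_cast; ring
    intro j hj
    calc ‖e (k + 1) j‖ ≤ (j : ℝ) * (ε * B) := key j hj
      _ ≤ (Nc : ℝ) * (ε * B) := by
          apply mul_le_mul_of_nonneg_right (by exact_mod_cast hj) (by positivity)
      _ = ((Nc : ℝ) * ε) ^ (k + 1) * M := by rw [hBdef, pow_succ]; ring
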